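/- Let H be a Hopf algebra with a left co-integral ∫_H normalized by ∫_H 1 = V_H with V_H invertible. Define P_L: H⊗H⊗H → H⊗H⊗H by P_L(Φ) = V_H⁻¹ (∫_H ⊗ id ⊗ id ⊗ id)((m³ ⊗ id³)∘Δ⁽³⁾ Φ), where Δ⁽³⁾(h₁⊗h₂⊗h₃) = (h₁⁽¹⁾⊗h₂⁽¹⁾⊗h₃⁽¹⁾)⊗(h₁⁽²⁾⊗h₂⁽²⁾⊗h₃⁽²⁾) and m³ multiplies three entries. Then P_L is a projector: P_L ∘ P_L = P_L. -/
import Mathlib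


open TensorProduct

namespace Stmt9

variable {K H : Type*} [Field K] [Ring H] [Bialgebra K H]

/-- Left invariance of a co-integral `∫ : H → K`: `(id ⊗ ∫)∘Δ = 1_H·∫`. -/
def IsLeftCoIntegral (f : H →ₗ[K] K) : Prop :=
  ∀ m : H, (TensorProduct.rid K H)
      (LinearMap.lTensor H f ((Coalgebra.comul : H →ₗ[K] H ⊗[K] H) m)) = f m • (1 : H)

/-- Iterated multiplication `m³ : H ⊗ H ⊗ H → H`. -/
noncomputable def mul3 : H ⊗[K] (H ⊗[K] H) →ₗ[K] H :=
  LinearMap.mul' K H ∘ₗ LinearMap.lTensor H (LinearMap.mul' K H)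

/-- The gauge projector
`P_L(Φ) = V_H⁻¹ (∫_H ⊗ id³)((m³ ⊗ id³) ∘ Δ⁽³⁾ Φ)`, where `Δ⁽³⁾` is the componentwise
coproduct on `H ⊗ H ⊗ H` (first Sweedler legs collected in front). -/
noncomputable def PL (intH : H →ₗ[K] K) (V : K) :
    H ⊗[K] (H ⊗[K] H) →ₗ[K] H ⊗[K] (H ⊗[K] H) :=
  V⁻¹ •
    ((TensorProduct.lid K (H ⊗[K] (H ⊗[K] H))).toLinearMap
      ∘ₗ LinearMap.rTensor (H ⊗[K] (H ⊗[K] H)) intH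
      ∘ₗ LinearMap.rTensor (H ⊗[K] (H ⊗[K] H)) (mul3 (K := K))
      ∘ₗ (TensorProduct.tensorTensorTensorComm K H H (H ⊗[K] H) (H ⊗[K] H)).toLinearMap
      ∘ₗ (TensorProduct.congr (LinearEquiv.refl K (H ⊗[K] H))
            (TensorProduct.tensorTensorTensorComm K H H H H)).toLinearMap
      ∘ₗ TensorProduct.map (Coalgebra.comul : H →ₗ[K] H ⊗[K] H)
          (TensorProduct.map (Coalgebra.comul : H →ₗ[K] H ⊗[K] H)
            (Coalgebra.comul : H →ₗ[K] H ⊗[K] H)))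

/-! ### Auxiliary machinery for the proof -/

@[simp]
lemma mul3_tmul (a c e : H) : mul3 (K := K) (a ⊗ₜ[K] (c ⊗ₜ[K] e)) = a * (c * e) := by
  simp [mul3]

/-- The shuffle `(A⊗B)⊗((A⊗B)⊗(A⊗B)) → (A⊗(A⊗A))⊗(B⊗(B⊗B))`. -/
noncomputable def sh3 (A B : Type*) [AddCommMonoid A] [AddCommMonoid B]
    [Module K A] [Module K B] :
    (A ⊗[K] B) ⊗[K] ((A ⊗[K] B) ⊗[K] (A ⊗[K] B)) →ₗ[K]
      (A ⊗[K] (A ⊗[K] A)) ⊗[K] (B ⊗[K] (B ⊗[K] B)) :=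
  (TensorProduct.tensorTensorTensorComm K A B (A ⊗[K] A) (B ⊗[K] B)).toLinearMap
    ∘ₗ (TensorProduct.congr (LinearEquiv.refl K (A ⊗[K] B))
        (TensorProduct.tensorTensorTensorComm K A B A B)).toLinearMap

@[simp]
lemma sh3_tmul {A B : Type*} [AddCommMonoid A] [AddCommMonoid B] [Module K A] [Module K B]
    (a c e : A) (b d f : B) :
    sh3 (K := K) A B ((a ⊗ₜ b) ⊗ₜ ((c ⊗ₜ d) ⊗ₜ (e ⊗ₜ f)))
      = (a ⊗ₜ (c ⊗ₜ e)) ⊗ₜ (b ⊗ₜ (d ⊗ₜ f)) := by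
  simp [sh3]

/-- The "integrate the first Sweedler legs" map. -/
noncomputable def Xi0 (intH : H →ₗ[K] K) :
    (H ⊗[K] H) ⊗[K] ((H ⊗[K] H) ⊗[K] (H ⊗[K] H)) →ₗ[K] H ⊗[K] (H ⊗[K] H) :=
  (TensorProduct.lid K (H ⊗[K] (H ⊗[K] H))).toLinearMap
    ∘ₗ LinearMap.rTensor (H ⊗[K] (H ⊗[K] H)) (intH ∘ₗ mul3 (K := K))
    ∘ₗ sh3 (K := K) H H

@[simp]
lemma Xi0_tmul (intH : H →ₗ[K] K) (a b c d e f : H) :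
    Xi0 intH ((a ⊗ₜ b) ⊗ₜ ((c ⊗ₜ d) ⊗ₜ (e ⊗ₜ f)))
      = intH (a * (c * e)) • (b ⊗ₜ[K] (d ⊗ₜ[K] f)) := by
  simp [Xi0]

/-- The unscaled gauge-averaging map. -/
noncomputable def FF (intH : H →ₗ[K] K) :
    H ⊗[K] (H ⊗[K] H) →ₗ[K] H ⊗[K] (H ⊗[K] H) :=
  Xi0 intH ∘ₗ TensorProduct.map (Coalgebra.comul : H →ₗ[K] H ⊗[K] H)
      (TensorProduct.map (Coalgebra.comul : H →ₗ[K] H ⊗[K] H)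
        (Coalgebra.comul : H →ₗ[K] H ⊗[K] H))

lemma FF_tmul (intH : H →ₗ[K] K) (x y z : H) :
    FF intH (x ⊗ₜ (y ⊗ₜ z))
      = Xi0 intH ((Coalgebra.comul x) ⊗ₜ ((Coalgebra.comul y) ⊗ₜ (Coalgebra.comul z))) := by
  simp [FF]

lemma PL_eq (intH : H →ₗ[K] K) (V : K) : PL intH V = V⁻¹ • FF intH := by
  unfold PL FF Xi0 sh3
  rw [LinearMap.rTensor_comp]
  rfl

/-- The scalar map `ψ(p⊗r⊗s) = (∫⊗∫)(p(rs))`. -/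
noncomputable def psi (intH : H →ₗ[K] K) :
    (H ⊗[K] H) ⊗[K] ((H ⊗[K] H) ⊗[K] (H ⊗[K] H)) →ₗ[K] K :=
  LinearMap.mul' K K ∘ₗ TensorProduct.map intH intH
    ∘ₗ LinearMap.mul' K (H ⊗[K] H)
    ∘ₗ LinearMap.lTensor (H ⊗[K] H) (LinearMap.mul' K (H ⊗[K] H))

lemma psi_apply (intH : H →ₗ[K] K) (p r s : H ⊗[K] H) :
    psi intH (p ⊗ₜ (r ⊗ₜ s))
      = LinearMap.mul' K K (TensorProduct.map intH intH (p * (r * s))) := by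
  simp [psi]

/-- Like `Xi0`, but with the second Sweedler legs being triples. -/
noncomputable def Xi2 (intH : H →ₗ[K] K) :
    (H ⊗[K] (H ⊗[K] H)) ⊗[K] ((H ⊗[K] (H ⊗[K] H)) ⊗[K] (H ⊗[K] (H ⊗[K] H)))
      →ₗ[K] H ⊗[K] (H ⊗[K] H) :=
  (TensorProduct.lid K (H ⊗[K] (H ⊗[K] H))).toLinearMap
    ∘ₗ TensorProduct.map (intH ∘ₗ mul3 (K := K)) (Xi0 intH)
    ∘ₗ sh3 (K := K) H (H ⊗[K] H)

@[simp]
lemma Xi2_tmul (intH : H →ₗ[K] K) (a c e : H) (u v t : H ⊗[K] H) :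
    Xi2 intH ((a ⊗ₜ u) ⊗ₜ ((c ⊗ₜ v) ⊗ₜ (e ⊗ₜ t)))
      = intH (a * (c * e)) • Xi0 intH (u ⊗ₜ (v ⊗ₜ t)) := by
  simp [Xi2]

/-- Like `Xi0`, but with the first Sweedler legs being pairs. -/
noncomputable def Xi5 (intH : H →ₗ[K] K) :
    ((H ⊗[K] H) ⊗[K] H) ⊗[K] (((H ⊗[K] H) ⊗[K] H) ⊗[K] ((H ⊗[K] H) ⊗[K] H))
      →ₗ[K] H ⊗[K] (H ⊗[K] H) :=
  (TensorProduct.lid K (H ⊗[K] (H ⊗[K] H))).toLinearMap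
    ∘ₗ LinearMap.rTensor (H ⊗[K] (H ⊗[K] H)) (psi intH)
    ∘ₗ sh3 (K := K) (H ⊗[K] H) H

@[simp]
lemma Xi5_tmul (intH : H →ₗ[K] K) (p r s : H ⊗[K] H) (b d f : H) :
    Xi5 intH ((p ⊗ₜ b) ⊗ₜ ((r ⊗ₜ d) ⊗ₜ (s ⊗ₜ f)))
      = psi intH (p ⊗ₜ (r ⊗ₜ s)) • (b ⊗ₜ[K] (d ⊗ₜ[K] f)) := by
  simp [Xi5]

/-- Consequence of left invariance: `(∫⊗∫)∘Δ = V·∫`. -/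
lemma int_int_comul (intH : H →ₗ[K] K) (hintH : IsLeftCoIntegral intH)
    (V : K) (hV : intH 1 = V) (m : H) :
    LinearMap.mul' K K (TensorProduct.map intH intH
      ((Coalgebra.comul : H →ₗ[K] H ⊗[K] H) m)) = V * intH m := by
  have hmaps : (LinearMap.mul' K K ∘ₗ TensorProduct.map intH intH : H ⊗[K] H →ₗ[K] K)
      = intH ∘ₗ (TensorProduct.rid K H).toLinearMap ∘ₗ LinearMap.lTensor H intH := by
    apply TensorProduct.ext'
    intro a b
    simp [mul_comm]
  have := congrArg intH (hintH m)
  calc LinearMap.mul' K K (TensorProduct.map intH intH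
        ((Coalgebra.comul : H →ₗ[K] H ⊗[K] H) m))
      = (LinearMap.mul' K K ∘ₗ TensorProduct.map intH intH)
        ((Coalgebra.comul : H →ₗ[K] H ⊗[K] H) m) := rfl
    _ = intH ((TensorProduct.rid K H)
        (LinearMap.lTensor H intH ((Coalgebra.comul : H →ₗ[K] H ⊗[K] H) m))) := by
        rw [hmaps]; rfl
    _ = intH (intH m • (1 : H)) := by rw [hintH m]
    _ = V * intH m := by rw [map_smul, smul_eq_mul, hV, mul_comm]

lemma psi_comul (intH : H →ₗ[K] K) (hintH : IsLeftCoIntegral intH)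
    (V : K) (hV : intH 1 = V) (a c e : H) :
    psi intH ((Coalgebra.comul a) ⊗ₜ ((Coalgebra.comul c) ⊗ₜ (Coalgebra.comul e)))
      = V * intH (a * (c * e)) := by
  rw [psi_apply, ← Bialgebra.comul_mul, ← Bialgebra.comul_mul]
  exact int_int_comul intH hintH V hV _

lemma k1 (intH : H →ₗ[K] K) (u v t : H ⊗[K] H) :
    FF intH (Xi0 intH (u ⊗ₜ (v ⊗ₜ t)))
      = Xi2 intH ((LinearMap.lTensor H (Coalgebra.comul : H →ₗ[K] H ⊗[K] H) u) ⊗ₜ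
          ((LinearMap.lTensor H (Coalgebra.comul : H →ₗ[K] H ⊗[K] H) v) ⊗ₜ
            (LinearMap.lTensor H (Coalgebra.comul : H →ₗ[K] H ⊗[K] H) t))) := by
  induction u using TensorProduct.induction_on with
  | zero => simp only [zero_tmul, tmul_zero, LinearMap.map_zero, smul_zero,
      LinearMap.comp_apply, LinearMap.smul_apply]
  | add u1 u2 h1 h2 => simp only [add_tmul, map_add, h1, h2, smul_add, LinearMap.comp_apply, LinearMap.smul_apply]
  | tmul a b =>
    induction v using TensorProduct.induction_on with
    | zero => simp only [zero_tmul, tmul_zero, LinearMap.map_zero, smul_zero,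
      LinearMap.comp_apply, LinearMap.smul_apply]
    | add v1 v2 h1 h2 => simp only [add_tmul, tmul_add, map_add, h1, h2, smul_add, LinearMap.comp_apply, LinearMap.smul_apply]
    | tmul c d =>
      induction t using TensorProduct.induction_on with
      | zero => simp only [zero_tmul, tmul_zero, LinearMap.map_zero, smul_zero,
      LinearMap.comp_apply, LinearMap.smul_apply]
      | add t1 t2 h1 h2 => simp only [add_tmul, tmul_add, map_add, h1, h2, smul_add, LinearMap.comp_apply, LinearMap.smul_apply]
      | tmul e f =>
        simp [FF_tmul, tmul_smul, smul_tmul]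

lemma k2b (intH : H →ₗ[K] K) :
    Xi2 intH ∘ₗ TensorProduct.map (TensorProduct.assoc K H H H).toLinearMap
        (TensorProduct.map (TensorProduct.assoc K H H H).toLinearMap
          (TensorProduct.assoc K H H H).toLinearMap)
      = Xi5 intH := by
  ext a b c d e f g h i
  simp [psi_apply, Algebra.TensorProduct.tmul_mul_tmul, LinearMap.mul'_apply, smul_smul]

lemma k2d (intH : H →ₗ[K] K) (hintH : IsLeftCoIntegral intH)
    (V : K) (hV : intH 1 = V) (u v t : H ⊗[K] H) :
    Xi5 intH ((LinearMap.rTensor H (Coalgebra.comul : H →ₗ[K] H ⊗[K] H) u) ⊗ₜ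
        ((LinearMap.rTensor H (Coalgebra.comul : H →ₗ[K] H ⊗[K] H) v) ⊗ₜ
          (LinearMap.rTensor H (Coalgebra.comul : H →ₗ[K] H ⊗[K] H) t)))
      = V • Xi0 intH (u ⊗ₜ (v ⊗ₜ t)) := by
  induction u using TensorProduct.induction_on with
  | zero => simp only [zero_tmul, tmul_zero, LinearMap.map_zero, smul_zero,
      LinearMap.comp_apply, LinearMap.smul_apply]
  | add u1 u2 h1 h2 => simp only [add_tmul, map_add, h1, h2, smul_add, LinearMap.comp_apply, LinearMap.smul_apply]
  | tmul a b =>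
    induction v using TensorProduct.induction_on with
    | zero => simp only [zero_tmul, tmul_zero, LinearMap.map_zero, smul_zero,
      LinearMap.comp_apply, LinearMap.smul_apply]
    | add v1 v2 h1 h2 => simp only [add_tmul, tmul_add, map_add, h1, h2, smul_add, LinearMap.comp_apply, LinearMap.smul_apply]
    | tmul c d =>
      induction t using TensorProduct.induction_on with
      | zero => simp only [zero_tmul, tmul_zero, LinearMap.map_zero, smul_zero,
      LinearMap.comp_apply, LinearMap.smul_apply]
      | add t1 t2 h1 h2 => simp only [add_tmul, tmul_add, map_add, h1, h2, smul_add, LinearMap.comp_apply, LinearMap.smul_apply]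
      | tmul e f =>
        rw [LinearMap.rTensor_tmul, LinearMap.rTensor_tmul, LinearMap.rTensor_tmul,
          Xi5_tmul, psi_comul intH hintH V hV, Xi0_tmul, smul_smul]

lemma main (intH : H →ₗ[K] K) (hintH : IsLeftCoIntegral intH)
    (V : K) (hV : intH 1 = V) :
    FF intH ∘ₗ FF intH = V • FF intH := by
  apply TensorProduct.ext'
  intro x q
  induction q using TensorProduct.induction_on with
  | zero => simp only [zero_tmul, tmul_zero, LinearMap.map_zero, smul_zero,
      LinearMap.comp_apply, LinearMap.smul_apply]
  | add q1 q2 h1 h2 => simp only [tmul_add, map_add, h1, h2, smul_add, LinearMap.comp_apply, LinearMap.smul_apply]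
  | tmul y z =>
    have hco : ∀ w : H,
        LinearMap.lTensor H (Coalgebra.comul : H →ₗ[K] H ⊗[K] H)
          ((Coalgebra.comul : H →ₗ[K] H ⊗[K] H) w)
        = (TensorProduct.assoc K H H H).toLinearMap
            (LinearMap.rTensor H (Coalgebra.comul : H →ₗ[K] H ⊗[K] H)
              ((Coalgebra.comul : H →ₗ[K] H ⊗[K] H) w)) := fun w =>
      (Coalgebra.coassoc_apply w).symm
    calc (FF intH ∘ₗ FF intH) (x ⊗ₜ (y ⊗ₜ z))
        = FF intH (Xi0 intH ((Coalgebra.comul x) ⊗ₜ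
            ((Coalgebra.comul y) ⊗ₜ (Coalgebra.comul z)))) := by
          rw [LinearMap.comp_apply, FF_tmul]
      _ = Xi2 intH
            ((LinearMap.lTensor H (Coalgebra.comul : H →ₗ[K] H ⊗[K] H)
                ((Coalgebra.comul : H →ₗ[K] H ⊗[K] H) x)) ⊗ₜ
              ((LinearMap.lTensor H (Coalgebra.comul : H →ₗ[K] H ⊗[K] H)
                ((Coalgebra.comul : H →ₗ[K] H ⊗[K] H) y)) ⊗ₜ
                (LinearMap.lTensor H (Coalgebra.comul : H →ₗ[K] H ⊗[K] H)
                  ((Coalgebra.comul : H →ₗ[K] H ⊗[K] H) z)))) := k1 intH _ _ _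
      _ = (Xi2 intH ∘ₗ TensorProduct.map (TensorProduct.assoc K H H H).toLinearMap
            (TensorProduct.map (TensorProduct.assoc K H H H).toLinearMap
              (TensorProduct.assoc K H H H).toLinearMap))
            ((LinearMap.rTensor H (Coalgebra.comul : H →ₗ[K] H ⊗[K] H)
                ((Coalgebra.comul : H →ₗ[K] H ⊗[K] H) x)) ⊗ₜ
              ((LinearMap.rTensor H (Coalgebra.comul : H →ₗ[K] H ⊗[K] H)
                ((Coalgebra.comul : H →ₗ[K] H ⊗[K] H) y)) ⊗ₜ
                (LinearMap.rTensor H (Coalgebra.comul : H →ₗ[K] H ⊗[K] H)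
                  ((Coalgebra.comul : H →ₗ[K] H ⊗[K] H) z)))) := by
          rw [LinearMap.comp_apply, TensorProduct.map_tmul, TensorProduct.map_tmul,
            hco x, hco y, hco z]
      _ = V • Xi0 intH ((Coalgebra.comul x) ⊗ₜ
            ((Coalgebra.comul y) ⊗ₜ (Coalgebra.comul z))) := by
          rw [k2b]; exact k2d intH hintH V hV _ _ _
      _ = (V • FF intH) (x ⊗ₜ (y ⊗ₜ z)) := by
          rw [LinearMap.smul_apply, FF_tmul]

/-- for a Hopf algebra `H` with a left co-integral `∫_H` normalized by
`∫_H 1 = V_H`, `V_H` invertible, the gauge-averaging map `P_L` is a projector: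
`P_L ∘ P_L = P_L`. -/
theorem statement9 [HopfAlgebra K H]
    (intH : H →ₗ[K] K) (hintH : IsLeftCoIntegral intH)
    (V : K) (hV : intH 1 = V) (hV0 : V ≠ 0) :
    PL intH V ∘ₗ PL intH V = PL intH V := by
  rw [PL_eq, LinearMap.smul_comp, LinearMap.comp_smul, main intH hintH V hV,
    smul_smul, smul_smul]
  rw [show V⁻¹ * V⁻¹ * V = V⁻¹ by field_simp]

end Stmt9
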